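/- Let X = {x_v : v ∈ V} ∪ {z_P : P ∈ 𝒫} be variables and C = {c_P : P ∈ 𝒫} constraints of the SGSP integer program on a tree G = (V,E), where each penalty subgraph P ∈ 𝒫 induces a connected subtree of G and each vertex v lies in at most Φ penalty subgraphs. Then the constraint (bipartite incidence) graph of this program has tree-width at most Φ. -/

import Mathlib

/-- A tree decomposition of a graph `G` with tree-index type `ι`. -/
structure TreeDecomposition {V : Type} (G : SimpleGraph V) (ι : Type) where
  tree : SimpleGraph ι
  isTree : tree.IsTree
  bag : ι → Finset V
  covers : ∀ v : V, ∃ t, v ∈ bag t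
  coversEdge : ∀ {u v : V}, G.Adj u v → ∃ t, u ∈ bag t ∧ v ∈ bag t
  pathCond : ∀ (v : V) {t₁ t₂ : ι}, v ∈ bag t₁ → v ∈ bag t₂ →
    ∀ (p : tree.Walk t₁ t₂), p.IsPath → ∀ s ∈ p.support, v ∈ bag s

/-!
Build the tree decomposition on the tree `G` with one pendant leaf attached, for every penalty
subtree `P`, at a vertex of `P`. The bag of a vertex `v` holds `x_v` and the constraints `c_P` with
`v ∈ P`, at most `Φ + 1` elements; the bag of the leaf of `P` is `{z_P, c_P}`. The nodes whose bag
contains `c_P` are `P` together with its leaf, a connected set, and in a tree every path between two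
vertices of a connected set stays inside it.
-/

open Sum

namespace SimpleGraph

variable {V L : Type*} {G : SimpleGraph V}

lemma Walk.IsCycle.exists_adj_ne_of_mem_support [DecidableEq V] {u v : V} {c : G.Walk u u}
    (hc : c.IsCycle) (hv : v ∈ c.support) : ∃ a b, a ≠ b ∧ G.Adj v a ∧ G.Adj v b := by
  have hc' := hc.rotate hv
  exact ⟨_, _, hc'.snd_ne_penultimate, (c.rotate v hv).adj_snd hc'.not_nil,
    ((c.rotate v hv).adj_penultimate hc'.not_nil).symm⟩

lemma IsAcyclic.support_subset_of_isPath [DecidableEq V] (hG : G.IsAcyclic) {u v : V}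
    {p : G.Walk u v} (hp : p.IsPath) (w : G.Walk u v) : p.support ⊆ w.support := by
  obtain rfl : p = w.bypass :=
    congrArg Subtype.val ((hG.subsingleton_path u v).elim ⟨p, hp⟩ ⟨_, w.bypass_isPath⟩)
  exact w.support_bypass_subset_support

lemma IsAcyclic.mem_of_mem_support_of_preconnected_induce (hG : G.IsAcyclic) {s : Set V}
    (hs : (G.induce s).Preconnected) {u v : V} (hu : u ∈ s) (hv : v ∈ s) {p : G.Walk u v}
    (hp : p.IsPath) {x : V} (hx : x ∈ p.support) : x ∈ s := by
  classical
  obtain ⟨w⟩ := hs ⟨u, hu⟩ ⟨v, hv⟩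
  have hxw : x ∈ (w.map (Embedding.induce s).toHom).support :=
    hG.support_subset_of_isPath hp _ hx
  simp only [Walk.support_map, List.mem_map] at hxw
  obtain ⟨y, -, rfl⟩ := hxw
  exact y.2

variable (G) in
def attachLeaves (f : L → V) : SimpleGraph (V ⊕ L) where
  Adj
    | inl u, inl v => G.Adj u v
    | inl u, inr l | inr l, inl u => u = f l
    | inr _, inr _ => False
  symm := ⟨by
    rintro (u | l) (v | l') h
    exacts [h.symm, h, h, h]⟩
  loopless := ⟨by
    rintro (u | l) h
    exacts [G.loopless.irrefl u h, h]⟩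

section attachLeaves

variable {f : L → V}

@[simp] lemma attachLeaves_adj_inr_inl {u : V} {l : L} :
    (G.attachLeaves f).Adj (inr l) (inl u) ↔ u = f l := Iff.rfl

@[simp] lemma attachLeaves_not_adj_inr_inr {l l' : L} :
    ¬(G.attachLeaves f).Adj (inr l) (inr l') := id

variable (G f) in
def attachLeavesInl : G →g G.attachLeaves f := ⟨inl, id⟩

lemma Connected.attachLeaves (hG : G.Connected) : (G.attachLeaves f).Connected := by
  have hinl (u v : V) : (G.attachLeaves f).Reachable (inl u) (inl v) :=
    (hG.preconnected u v).map (attachLeavesInl G f)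
  have hleaf (x : V ⊕ L) : ∃ v, (G.attachLeaves f).Reachable (inl v) x := by
    rcases x with v | l
    · exact ⟨v, .rfl⟩
    · exact ⟨f l, Adj.reachable rfl⟩
  have := hG.nonempty
  refine .mk fun x y => ?_
  obtain ⟨u, hu⟩ := hleaf x
  obtain ⟨v, hv⟩ := hleaf y
  exact hu.symm.trans ((hinl u v).trans hv)

lemma IsAcyclic.attachLeaves (hG : G.IsAcyclic) : (G.attachLeaves f).IsAcyclic := by
  classical
  intro x c hc
  -- a leaf has a single neighbour, so it lies on no cycle
  have hinl : ∀ y ∈ c.support, y ∈ Set.range inl := by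
    rintro (v | l) hy
    · exact ⟨v, rfl⟩
    · obtain ⟨a | a, b | b, hab, ha, hb⟩ := hc.exists_adj_ne_of_mem_support hy <;> simp_all
  let retract : (G.attachLeaves f).induce (Set.range inl) →g G :=
    { toFun := fun y => Sum.elim id f y.1
      map_rel' := by
        rintro ⟨_, u, rfl⟩ ⟨_, v, rfl⟩ h
        exact h }
  have hinj : Function.Injective retract := by
    rintro ⟨_, u, rfl⟩ ⟨_, v, rfl⟩ h
    simp_all [retract]
  have hcind : (c.induce _ hinl).IsCycle :=
    .of_map (f := (Embedding.induce _).toHom) (by rwa [Walk.map_induce])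
  exact hG _ (hcind.map hinj)

lemma IsTree.attachLeaves (hG : G.IsTree) : (G.attachLeaves f).IsTree :=
  ⟨hG.connected.attachLeaves, hG.isAcyclic.attachLeaves⟩

lemma Preconnected.induce_image_inl_union_leaf {s : Set V} (hs : (G.induce s).Preconnected)
    {l : L} (hl : f l ∈ s) :
    ((G.attachLeaves f).induce (inl '' s ∪ {inr l})).Preconnected := by
  have himage : ((G.attachLeaves f).induce (inl '' s)).Preconnected := by
    refine hs.map (induceHom (attachLeavesInl G f) (Set.mapsTo_image _ _)) ?_
    rintro ⟨_, v, hv, rfl⟩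
    exact ⟨⟨v, hv⟩, rfl⟩
  exact (connected_induce_union (t := {inr l}) himage Preconnected.of_subsingleton
    (Set.mem_image_of_mem _ hl) rfl (by exact rfl)).preconnected

end attachLeaves

end SimpleGraph

open SimpleGraph

def TreeDecomposition.ofPreconnected {V ι : Type} {G : SimpleGraph V} (T : SimpleGraph ι)
    (hT : T.IsTree) (bag : ι → Finset V) (covers : ∀ v, ∃ t, v ∈ bag t)
    (coversEdge : ∀ {u v}, G.Adj u v → ∃ t, u ∈ bag t ∧ v ∈ bag t)
    (preconnected : ∀ v, (T.induce {t | v ∈ bag t}).Preconnected) : TreeDecomposition G ι where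
  tree := T
  isTree := hT
  bag := bag
  covers := covers
  coversEdge := coversEdge
  pathCond v _ _ h₁ h₂ _ hp _ hs :=
    hT.isAcyclic.mem_of_mem_support_of_preconnected_induce (preconnected v) h₁ h₂ hp hs

namespace SGSP

variable {V P : Type} (Vp : P → Finset V) [DecidableEq V] [DecidableEq P] [Fintype P]

def bag : V ⊕ P → Finset ((V ⊕ P) ⊕ P)
  | inl v => insert (inl (inl v)) ((Finset.univ.filter (fun p => v ∈ Vp p)).map .inr)
  | inr p => {inl (inr p), inr p}

lemma setOf_mem_bag_x (v : V) : {t | inl (inl v) ∈ bag Vp t} = {inl v} := by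
  ext (u | p) <;> simp [bag, eq_comm]

lemma setOf_mem_bag_z (q : P) : {t | inl (inr q) ∈ bag Vp t} = {inr q} := by
  ext (u | p) <;> simp [bag, eq_comm]

lemma setOf_mem_bag_c (p : P) : {t | inr p ∈ bag Vp t} = inl '' ↑(Vp p) ∪ {inr p} := by
  ext (u | q) <;> simp [bag, eq_comm]

lemma card_bag_le {Φ : ℕ} (hfreq : ∀ v : V, (Finset.univ.filter (fun p => v ∈ Vp p)).card ≤ Φ)
    (hne : ∀ p, (Vp p).Nonempty) (t : V ⊕ P) : (bag Vp t).card ≤ Φ + 1 := by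
  rcases t with v | p
  · refine (Finset.card_insert_le _ _).trans ?_
    rw [Finset.card_map]
    exact Nat.add_le_add_right (hfreq v) 1
  · obtain ⟨v, hv⟩ := hne p
    have hΦ : 0 < Φ :=
      (Finset.card_pos.mpr ⟨p, Finset.mem_filter.mpr ⟨Finset.mem_univ p, hv⟩⟩).trans_le (hfreq v)
    calc (bag Vp (inr p)).card ≤ 2 := Finset.card_le_two
      _ ≤ Φ + 1 := by omega

variable {Vp} in
def treeDecomposition {G : SimpleGraph V} (hG : G.IsTree)
    (hconn : ∀ p, (G.induce (↑(Vp p) : Set V)).Preconnected) (ch : P → V)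
    (hch : ∀ p, ch p ∈ Vp p) {H : SimpleGraph ((V ⊕ P) ⊕ P)}
    (hH : ∀ {x y}, H.Adj x y → ∃ t, x ∈ bag Vp t ∧ y ∈ bag Vp t) : TreeDecomposition H (V ⊕ P) :=
  .ofPreconnected (G.attachLeaves ch) hG.attachLeaves (bag Vp)
    (by rintro ((v | q) | p) <;> simp [bag]) hH <| by
      rintro ((v | q) | p)
      · rw [setOf_mem_bag_x]
        exact .of_subsingleton
      · rw [setOf_mem_bag_z]
        exact .of_subsingleton
      · rw [setOf_mem_bag_c]
        exact (hconn p).induce_image_inl_union_leaf (hch p)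

end SGSP

/-- Variables `x_v` are `inl (inl v)`, variables `z_P` are `inl (inr P)`, constraints `c_P` are
`inr P`. -/
theorem stmt13 {V P : Type} [DecidableEq V] [Fintype P]
    (G : SimpleGraph V) (hG : G.IsTree)
    (Vp : P → Finset V)
    (hconn : ∀ p, (G.induce (↑(Vp p) : Set V)).Connected)
    (Φ : ℕ)
    (hfreq : ∀ v : V, (Finset.univ.filter (fun p => v ∈ Vp p)).card ≤ Φ) :
    ∃ (ι : Type) (D : TreeDecomposition
        (SimpleGraph.fromRel (fun x y : (V ⊕ P) ⊕ P =>
          match x, y with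
          | Sum.inl (Sum.inl v), Sum.inr p => v ∈ Vp p
          | Sum.inl (Sum.inr q), Sum.inr p => q = p
          | _, _ => False)) ι),
      ∀ t, (D.bag t).card ≤ Φ + 1 := by
  classical
  have hne (p : P) : (Vp p).Nonempty :=
    Finset.coe_nonempty.mp (Set.nonempty_coe_sort.mp (hconn p).nonempty)
  choose ch hch using hne
  refine ⟨V ⊕ P, SGSP.treeDecomposition hG (fun p => (hconn p).preconnected) ch hch ?_,
    SGSP.card_bag_le Vp hfreq fun p => ⟨ch p, hch p⟩⟩
  intro x y h
  rcases x with (v | q) | p <;> rcases y with (u | q') | p' <;> simp_all [SGSP.bag, eq_comm]
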